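/- arXiv:2004.04451 — 3 statements merged into one kernel-verified Lean document; each statement's English description precedes it below -/
import Mathlib

section
/- Let H be a complex Hilbert space and A : H → H a bounded self-adjoint operator with spectrum contained in [0,1]. Let p > 0, ε > 0, and let φ be an index function such that μ ↦ φ(μ)/μ^{p+1} is non-increasing on (0,∞); extend φ continuously to [0,∞) by φ(0) = 0. Define g : [0,1] → ℝ by g(λ) = (ε/(ε+λ))·φ(λ^{1/(p+1)}) for λ > 0 and g(0) = 0. Then the operator g(A) obtained by continuous functional calculus satisfies ‖g(A)‖ ≤ φ(ε^{1/(p+1)}). -/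
/-- Operator-level content of Proposition 1, case 1: let `A` be a bounded self-adjoint
operator on a complex Hilbert space with spectrum in `[0,1]`, `p > 0`, `ε > 0`, and `φ`
an index function with `μ ↦ φ(μ)/μ^{p+1}` non-increasing on `(0,∞)`, extended by
`φ(0) = 0`. With `g(λ) = (ε/(ε+λ))·φ(λ^{1/(p+1)})` for `λ > 0` and `g(0) = 0`, the
continuous functional calculus satisfies `‖g(A)‖ ≤ φ(ε^{1/(p+1)})`. -/
theorem nonstationary_bias_bound_operator {H : Type*} [NormedAddCommGroup H]
    [InnerProductSpace ℂ H] [CompleteSpace H]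
    (A : H →L[ℂ] H) (hA : IsSelfAdjoint A) (hspec : spectrum ℝ A ⊆ Set.Icc 0 1)
    (p ε : ℝ) (hp : 0 < p) (hε : 0 < ε) (φ : ℝ → ℝ)
    (hφ_pos : ∀ x : ℝ, 0 < x → 0 < φ x)
    (hφ_mono : MonotoneOn φ (Set.Ioi 0))
    (hφ_cont : ContinuousOn φ (Set.Ioi 0))
    (hφ_lim : Filter.Tendsto φ (nhdsWithin 0 (Set.Ioi 0)) (nhds 0))
    (hφ_zero : φ 0 = 0)
    (hφ_anti : AntitoneOn (fun μ : ℝ => φ μ / μ ^ (p + 1)) (Set.Ioi 0))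
    (g : ℝ → ℝ) (hg_zero : g 0 = 0)
    (hg : ∀ lam : ℝ, 0 < lam → g lam = (ε / (ε + lam)) * φ (lam ^ (1 / (p + 1)))) :
    ‖cfc g A‖ ≤ φ (ε ^ (1 / (p + 1))) := by
  have hq : 0 < 1 / (p + 1) := by positivity
  have hεq : 0 < ε ^ (1 / (p + 1)) := Real.rpow_pos_of_pos hε _
  have hbound : 0 ≤ φ (ε ^ (1 / (p + 1))) := (hφ_pos _ hεq).le
  apply norm_cfc_le hbound
  intro lam hlam
  obtain ⟨hlam0, -⟩ := hspec hlam
  rcases eq_or_lt_of_le hlam0 with h0 | h0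
  · rw [← h0, hg_zero, norm_zero]; exact hbound
  · rw [hg lam h0]
    have hlq : 0 < lam ^ (1 / (p + 1)) := Real.rpow_pos_of_pos h0 _
    have hφl : 0 ≤ φ (lam ^ (1 / (p + 1))) := (hφ_pos _ hlq).le
    have hfrac : 0 ≤ ε / (ε + lam) := by positivity
    rw [Real.norm_eq_abs, abs_of_nonneg (mul_nonneg hfrac hφl)]
    rcases le_total lam ε with hle | hle
    · have h1 : ε / (ε + lam) ≤ 1 := by
        rw [div_le_one (by linarith)]; linarith
      have h2 : φ (lam ^ (1 / (p + 1))) ≤ φ (ε ^ (1 / (p + 1))) :=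
        hφ_mono hlq hεq (Real.rpow_le_rpow h0.le hle hq.le)
      calc ε / (ε + lam) * φ (lam ^ (1 / (p + 1)))
          ≤ 1 * φ (ε ^ (1 / (p + 1))) := mul_le_mul h1 h2 hφl zero_le_one
        _ = _ := one_mul _
    · have hrle : ε ^ (1 / (p + 1)) ≤ lam ^ (1 / (p + 1)) :=
        Real.rpow_le_rpow hε.le hle hq.le
      have key := hφ_anti (Set.mem_Ioi.mpr hεq) (Set.mem_Ioi.mpr hlq) hrle
      have hpow : ∀ x : ℝ, 0 < x → (x ^ (1 / (p + 1))) ^ (p + 1) = x := by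
        intro x hx
        rw [← Real.rpow_mul hx.le, one_div, inv_mul_cancel₀ (by positivity : p + 1 ≠ 0),
          Real.rpow_one]
      simp only [hpow ε hε, hpow lam h0] at key
      -- key : φ (lam ^ q) / lam ≤ φ (ε ^ q) / ε
      have h3 : φ (lam ^ (1 / (p + 1))) ≤ lam / ε * φ (ε ^ (1 / (p + 1))) := by
        rw [div_le_div_iff₀ h0 hε] at key
        rw [div_mul_eq_mul_div, le_div_iff₀ hε]
        linarith [key]
      have h4 : ε / (ε + lam) * (lam / ε * φ (ε ^ (1 / (p + 1))))
          = lam / (ε + lam) * φ (ε ^ (1 / (p + 1))) := by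
        field_simp
      calc ε / (ε + lam) * φ (lam ^ (1 / (p + 1)))
          ≤ ε / (ε + lam) * (lam / ε * φ (ε ^ (1 / (p + 1)))) :=
            mul_le_mul_of_nonneg_left h3 hfrac
        _ = lam / (ε + lam) * φ (ε ^ (1 / (p + 1))) := h4
        _ ≤ 1 * φ (ε ^ (1 / (p + 1))) := by
            apply mul_le_mul_of_nonneg_right _ hbound
            rw [div_le_one (by linarith)]; linarith
        _ = _ := one_mul _
end

section
/- Let p > 0, ν₀ > 0, and let φ be an index function such that the map λ ↦ φ(λ^{1/(p+1)})/λ^{ν₀/(p+1)} is non-increasing on (0,∞). Then for every ε > 0 and every λ with 0 < λ ≤ 1, e^{-λ/ε}·φ(λ^{1/(p+1)}) ≤ c·φ(ε^{1/(p+1)}), where c = max{(ν₀/(p+1))^{ν₀/(p+1)}, 1}. -/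
lemma rpow_mul_exp_neg_le (ν t : ℝ) (hν : 0 < ν) (ht : 0 < t) :
    t ^ ν * Real.exp (-t) ≤ ν ^ ν := by
  have key : ν * Real.log t - t ≤ ν * Real.log ν := by
    have h1 : Real.log (t / ν) ≤ t / ν - 1 := Real.log_le_sub_one_of_pos (by positivity)
    have h2 : Real.log (t / ν) = Real.log t - Real.log ν :=
      Real.log_div (ne_of_gt ht) (ne_of_gt hν)
    have h3 : ν * (t / ν - 1) = t - ν := by field_simp
    nlinarith [mul_le_mul_of_nonneg_left h1 hν.le, h2, h3]
  have ht' : t ^ ν = Real.exp (ν * Real.log t) := by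
    rw [Real.rpow_def_of_pos ht]; ring_nf
  have hν' : ν ^ ν = Real.exp (ν * Real.log ν) := by
    rw [Real.rpow_def_of_pos hν]; ring_nf
  rw [ht', hν', ← Real.exp_add]
  exact Real.exp_le_exp.mpr (by linarith)

/-- Spectral form of Proposition 3: if `φ` is an index function such that
`λ ↦ φ(λ^{1/(p+1)})/λ^{ν₀/(p+1)}` is non-increasing on `(0,∞)`, then for every `ε > 0`
and `0 < λ ≤ 1`, `e^{-λ/ε}·φ(λ^{1/(p+1)}) ≤ c·φ(ε^{1/(p+1)})` with
`c = max{(ν₀/(p+1))^{ν₀/(p+1)}, 1}`. -/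
theorem stationary_bias_bound_scalar (p ν₀ : ℝ) (hp : 0 < p) (hν₀ : 0 < ν₀) (φ : ℝ → ℝ)
    (hφ_pos : ∀ x : ℝ, 0 < x → 0 < φ x)
    (hφ_mono : MonotoneOn φ (Set.Ioi 0))
    (hφ_cont : ContinuousOn φ (Set.Ioi 0))
    (hφ_lim : Filter.Tendsto φ (nhdsWithin 0 (Set.Ioi 0)) (nhds 0))
    (hφ_anti : AntitoneOn
      (fun lam : ℝ => φ (lam ^ (1 / (p + 1))) / lam ^ (ν₀ / (p + 1))) (Set.Ioi 0)) :
    ∀ ε lam : ℝ, 0 < ε → 0 < lam → lam ≤ 1 →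
      Real.exp (-lam / ε) * φ (lam ^ (1 / (p + 1))) ≤
        max ((ν₀ / (p + 1)) ^ (ν₀ / (p + 1))) 1 * φ (ε ^ (1 / (p + 1))) := by
  intro ε lam hε hlam hlam1
  set ν := ν₀ / (p + 1) with hνdef
  have hν : 0 < ν := div_pos hν₀ (by linarith)
  have hφε : 0 < φ (ε ^ (1 / (p + 1))) := hφ_pos _ (Real.rpow_pos_of_pos hε _)
  have hφl : 0 < φ (lam ^ (1 / (p + 1))) := hφ_pos _ (Real.rpow_pos_of_pos hlam _)
  rcases le_or_gt lam ε with h | h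
  · -- easy case: exp ≤ 1 and φ monotone
    have h1 : Real.exp (-lam / ε) ≤ 1 := by
      rw [neg_div]
      exact Real.exp_le_one_iff.mpr (neg_nonpos.mpr (div_pos hlam hε).le)
    have h2 : φ (lam ^ (1 / (p + 1))) ≤ φ (ε ^ (1 / (p + 1))) := by
      apply hφ_mono (Set.mem_Ioi.mpr (Real.rpow_pos_of_pos hlam _))
        (Set.mem_Ioi.mpr (Real.rpow_pos_of_pos hε _))
      exact Real.rpow_le_rpow hlam.le h (by positivity)
    calc Real.exp (-lam / ε) * φ (lam ^ (1 / (p + 1)))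
        ≤ 1 * φ (ε ^ (1 / (p + 1))) := by
          apply mul_le_mul h1 h2 hφl.le zero_le_one
      _ ≤ max (ν ^ ν) 1 * φ (ε ^ (1 / (p + 1))) := by
          apply mul_le_mul_of_nonneg_right (le_max_right _ _) hφε.le
  · -- main case ε < lam: use antitonicity
    have hanti := hφ_anti (Set.mem_Ioi.mpr hε) (Set.mem_Ioi.mpr hlam) h.le
    simp only at hanti
    have hlν : (0:ℝ) < lam ^ ν := Real.rpow_pos_of_pos hlam _
    have hεν : (0:ℝ) < ε ^ ν := Real.rpow_pos_of_pos hε _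
    have h2 : φ (lam ^ (1 / (p + 1))) ≤ (lam / ε) ^ ν * φ (ε ^ (1 / (p + 1))) := by
      rw [Real.div_rpow hlam.le hε.le]
      rw [div_le_div_iff₀ hlν hεν] at hanti
      rw [div_mul_eq_mul_div, le_div_iff₀ hεν]
      linarith [hanti]
    have ht : 0 < lam / ε := div_pos hlam hε
    have h3 : (lam / ε) ^ ν * Real.exp (-(lam / ε)) ≤ ν ^ ν :=
      rpow_mul_exp_neg_le ν (lam / ε) hν ht
    calc Real.exp (-lam / ε) * φ (lam ^ (1 / (p + 1)))
        ≤ Real.exp (-lam / ε) * ((lam / ε) ^ ν * φ (ε ^ (1 / (p + 1)))) :=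
          mul_le_mul_of_nonneg_left h2 (Real.exp_pos _).le
      _ = ((lam / ε) ^ ν * Real.exp (-(lam / ε))) * φ (ε ^ (1 / (p + 1))) := by
          rw [neg_div]; ring
      _ ≤ ν ^ ν * φ (ε ^ (1 / (p + 1))) := mul_le_mul_of_nonneg_right h3 hφε.le
      _ ≤ max (ν ^ ν) 1 * φ (ε ^ (1 / (p + 1))) :=
          mul_le_mul_of_nonneg_right (le_max_left _ _) hφε.le
end

section
/- Let H be a complex Hilbert space and A : H → H a bounded self-adjoint operator with spectrum contained in [0,1]. Let p > 0, ν₀ > 0, ε > 0, and let φ be an index function such that λ ↦ φ(λ^{1/(p+1)})/λ^{ν₀/(p+1)} is non-increasing on (0,∞); extend φ continuously to [0,∞) by φ(0) = 0. Define g : [0,1] → ℝ by g(λ) = e^{-λ/ε}·φ(λ^{1/(p+1)}) for λ > 0 and g(0) = 0. Then the operator g(A) obtained by continuous functional calculus satisfies ‖g(A)‖ ≤ c·φ(ε^{1/(p+1)}), where c = max{(ν₀/(p+1))^{ν₀/(p+1)}, 1}. -/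
lemma exp_neg_mul_rpow_le {nu t : ℝ} (hnu : 0 < nu) (ht : 0 < t) :
    Real.exp (-t) * t ^ nu ≤ nu ^ nu := by
  have h1 : Real.log (t / nu) ≤ t / nu - 1 := Real.log_le_sub_one_of_pos (by positivity)
  have h2 : nu * Real.log t - t ≤ nu * Real.log nu := by
    rw [Real.log_div ht.ne' hnu.ne'] at h1
    nlinarith [mul_le_mul_of_nonneg_left h1 hnu.le, mul_div_cancel₀ t hnu.ne']
  calc Real.exp (-t) * t ^ nu = Real.exp (nu * Real.log t - t) := by
        rw [Real.rpow_def_of_pos ht, ← Real.exp_add]; ring_nf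
    _ ≤ Real.exp (nu * Real.log nu) := Real.exp_le_exp.mpr h2
    _ = nu ^ nu := by rw [Real.rpow_def_of_pos hnu, mul_comm]

/-- Operator-level content of Proposition 3: let `A` be a bounded self-adjoint operator
on a complex Hilbert space with spectrum in `[0,1]`, `p, ν₀, ε > 0`, and `φ` an index
function with `λ ↦ φ(λ^{1/(p+1)})/λ^{ν₀/(p+1)}` non-increasing on `(0,∞)`, extended by
`φ(0) = 0`. With `g(λ) = e^{-λ/ε}·φ(λ^{1/(p+1)})` for `λ > 0` and `g(0) = 0`, the
continuous functional calculus satisfies `‖g(A)‖ ≤ c·φ(ε^{1/(p+1)})` where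
`c = max{(ν₀/(p+1))^{ν₀/(p+1)}, 1}`. -/
theorem stationary_bias_bound_operator {H : Type*} [NormedAddCommGroup H]
    [InnerProductSpace ℂ H] [CompleteSpace H]
    (A : H →L[ℂ] H) (hA : IsSelfAdjoint A) (hspec : spectrum ℝ A ⊆ Set.Icc 0 1)
    (p ν₀ ε : ℝ) (hp : 0 < p) (hν₀ : 0 < ν₀) (hε : 0 < ε) (φ : ℝ → ℝ)
    (hφ_pos : ∀ x : ℝ, 0 < x → 0 < φ x)
    (hφ_mono : MonotoneOn φ (Set.Ioi 0))
    (hφ_cont : ContinuousOn φ (Set.Ioi 0))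
    (hφ_lim : Filter.Tendsto φ (nhdsWithin 0 (Set.Ioi 0)) (nhds 0))
    (hφ_zero : φ 0 = 0)
    (hφ_anti : AntitoneOn
      (fun lam : ℝ => φ (lam ^ (1 / (p + 1))) / lam ^ (ν₀ / (p + 1))) (Set.Ioi 0))
    (g : ℝ → ℝ) (hg_zero : g 0 = 0)
    (hg : ∀ lam : ℝ, 0 < lam → g lam = Real.exp (-lam / ε) * φ (lam ^ (1 / (p + 1)))) :
    ‖cfc g A‖ ≤ max ((ν₀ / (p + 1)) ^ (ν₀ / (p + 1))) 1 * φ (ε ^ (1 / (p + 1))) := by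
  set q := 1 / (p + 1) with hq
  set ν := ν₀ / (p + 1) with hν
  have hq0 : 0 < q := by positivity
  have hν0 : 0 < ν := by positivity
  have hεq : 0 < ε ^ q := Real.rpow_pos_of_pos hε q
  have hφε : 0 < φ (ε ^ q) := hφ_pos _ hεq
  have hc1 : (1 : ℝ) ≤ max (ν ^ ν) 1 := le_max_right _ _
  have hc0 : 0 ≤ max (ν ^ ν) 1 * φ (ε ^ q) := by positivity
  refine norm_cfc_le hc0 fun x hx => ?_
  obtain ⟨hx0, hx1⟩ := hspec hx
  rcases eq_or_lt_of_le hx0 with rfl | hx0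
  · simpa [hg_zero] using hc0
  · have hgx := hg x hx0
    have hxq : 0 < x ^ q := Real.rpow_pos_of_pos hx0 q
    have hφx : 0 < φ (x ^ q) := hφ_pos _ hxq
    have hgpos : 0 < g x := by rw [hgx]; positivity
    rw [Real.norm_eq_abs, abs_of_pos hgpos, hgx]
    rcases le_or_gt x ε with hxe | hxe
    · have h1 : φ (x ^ q) ≤ φ (ε ^ q) :=
        hφ_mono hxq hεq (Real.rpow_le_rpow hx0.le hxe hq0.le)
      have h2 : Real.exp (-x / ε) ≤ 1 := by
        rw [Real.exp_le_one_iff, neg_div, neg_nonpos]; positivity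
      calc Real.exp (-x / ε) * φ (x ^ q) ≤ 1 * φ (ε ^ q) :=
            mul_le_mul h2 h1 hφx.le zero_le_one
        _ ≤ max (ν ^ ν) 1 * φ (ε ^ q) := by
            apply mul_le_mul_of_nonneg_right hc1 hφε.le
    · have hε' : ε ∈ Set.Ioi (0:ℝ) := hε
      have hx' : x ∈ Set.Ioi (0:ℝ) := hx0
      have hratio := hφ_anti hε' hx' hxe.le
      simp only at hratio
      have hxν : 0 < x ^ ν := Real.rpow_pos_of_pos hx0 ν
      have hεν : 0 < ε ^ ν := Real.rpow_pos_of_pos hε ν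
      have h1 : φ (x ^ q) ≤ φ (ε ^ q) * (x / ε) ^ ν := by
        rw [Real.div_rpow hx0.le hε.le, mul_div_assoc']
        rw [div_le_div_iff₀ hxν hεν] at hratio
        exact (le_div_iff₀ hεν).mpr hratio
      have ht : 0 < x / ε := by positivity
      have h2 : Real.exp (-x / ε) * (x / ε) ^ ν ≤ ν ^ ν := by
        have := exp_neg_mul_rpow_le hν0 ht
        rwa [← neg_div] at this
      calc Real.exp (-x / ε) * φ (x ^ q)
          ≤ Real.exp (-x / ε) * (φ (ε ^ q) * (x / ε) ^ ν) :=
            mul_le_mul_of_nonneg_left h1 (Real.exp_pos _).le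
        _ = Real.exp (-x / ε) * (x / ε) ^ ν * φ (ε ^ q) := by ring
        _ ≤ ν ^ ν * φ (ε ^ q) := mul_le_mul_of_nonneg_right h2 hφε.le
        _ ≤ max (ν ^ ν) 1 * φ (ε ^ q) :=
            mul_le_mul_of_nonneg_right (le_max_left _ _) hφε.le
end
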